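/- If M is a uniquely restricted matching in a graph G' obtained from G by deleting two adjacent vertices u, v and adding a new edge u'w (where u' and w are vertices of G'), and uu', vw, uv are edges of G, then either M ∪ {uv} (if u'w ∉ M) or (M \ {u'w}) ∪ {uu', vw} (if u'w ∈ M) is a matching in G covering exactly M's vertices plus {u,v}; under the bridge hypotheses of the paper (uu' and vw bridges of G), this matching is uniquely restricted in G. -/

import Mathlib

open SimpleGraph

/-- A set of edges `M` is a matching in `G` if all its elements are edges of `G`
and distinct edges of `M` share no endpoint. -/
def IsMatchingSet {V : Type*} (G : SimpleGraph V) (M : Set (Sym2 V)) : Prop :=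
  M ⊆ G.edgeSet ∧ M.Pairwise fun e f => ∀ v : V, v ∈ e → v ∉ f

/-- The set of vertices covered by a set of edges. -/
def coveredVerts {V : Type*} (M : Set (Sym2 V)) : Set V := {v | ∃ e ∈ M, v ∈ e}

/-- A matching is uniquely restricted if no other matching covers the same vertex set. -/
def IsURMatching {V : Type*} (G : SimpleGraph V) (M : Set (Sym2 V)) : Prop :=
  IsMatchingSet G M ∧
    ∀ N : Set (Sym2 V), IsMatchingSet G N → coveredVerts N = coveredVerts M → N = M

/-- An `M`-alternating cycle: a cycle whose edges alternate (cyclically)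
between `M` and the complement of `M`. -/
def IsAltCycle {V : Type*} (G : SimpleGraph V) (M : Set (Sym2 V)) {v : V}
    (c : G.Walk v v) : Prop :=
  c.IsCycle ∧ List.Chain' (fun e f => (e ∈ M) ↔ ¬ (f ∈ M)) c.edges ∧
    ∀ e f : Sym2 V, c.edges.head? = some e → c.edges.getLast? = some f →
      ((f ∈ M) ↔ ¬ (e ∈ M))

/-- The graph obtained from `G` by deleting the vertices in `S`
(they remain as isolated vertices). -/
def delVerts {V : Type*} (G : SimpleGraph V) (S : Set V) : SimpleGraph V where
  Adj x y := G.Adj x y ∧ x ∉ S ∧ y ∉ S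
  symm := by constructor; rintro x y ⟨h, hx, hy⟩; exact ⟨h.symm, hy, hx⟩
  loopless := by constructor; rintro x ⟨h, -, -⟩; exact (G.ne_of_adj h) rfl

/-- The maximum size of a uniquely restricted matching in `G`. -/
noncomputable def nuUR {V : Type*} (G : SimpleGraph V) : ℕ :=
  sSup {k | ∃ M : Set (Sym2 V), IsURMatching G M ∧ M.ncard = k}

/-- The matching number of `G`. -/
noncomputable def nuM {V : Type*} (G : SimpleGraph V) : ℕ :=
  sSup {k | ∃ M : Set (Sym2 V), IsMatchingSet G M ∧ M.ncard = k}

/-- A bridge is good if it lies on a path between two vertices of degree at most 2. -/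
def IsGoodBridge {V : Type*} [Fintype V] (G : SimpleGraph V) [DecidableRel G.Adj]
    (e : Sym2 V) : Prop :=
  G.IsBridge e ∧ ∃ (x y : V) (p : G.Walk x y),
    p.IsPath ∧ G.degree x ≤ 2 ∧ G.degree y ≤ 2 ∧ e ∈ p.edges

/-!
Two matchings of `G` covering the same vertex set differ by vertex-disjoint alternating cycles,
and no cycle passes through a bridge; hence any matching `N` of `G` with the same cover as the
lifted matching contains the same bridges `uu'`, `vw`. In the first case `N` must match `u`
along `uv`, because `u` has degree 2 and `uu'` is not in the lifted matching. Removing these edges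
from `N` (and putting `u'w` back in the second case) gives a matching of `G'` with the cover of
`M`, which is `M` itself by unique restrictedness, so `N` is the lifted matching.
-/

namespace IsMatchingSet

variable {V : Type*} {G H : SimpleGraph V} {M N : Set (Sym2 V)}

lemma eq_of_mem_of_mem (hM : IsMatchingSet G M) {e f : Sym2 V} (he : e ∈ M) (hf : f ∈ M)
    {x : V} (hxe : x ∈ e) (hxf : x ∈ f) : e = f := by
  by_contra hne
  exact hM.2 he hf hne x hxe hxf

lemma eq_of_mk_mem_of_mk_mem (hM : IsMatchingSet G M) {x y z : V} (hy : s(x, y) ∈ M)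
    (hz : s(x, z) ∈ M) : y = z :=
  Sym2.congr_right.mp (hM.eq_of_mem_of_mem hy hz (Sym2.mem_mk_left x y) (Sym2.mem_mk_left x z))

lemma mono (hM : IsMatchingSet G M) (hGH : G ≤ H) : IsMatchingSet H M :=
  ⟨hM.1.trans (edgeSet_mono hGH), hM.2⟩

lemma subset (hM : IsMatchingSet G M) (hNM : N ⊆ M) : IsMatchingSet G N :=
  ⟨hNM.trans hM.1, hM.2.mono hNM⟩

end IsMatchingSet

section CoveredVerts

variable {V : Type*} {G : SimpleGraph V} {M : Set (Sym2 V)} {a b x : V}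

lemma mem_coveredVerts_iff : x ∈ coveredVerts M ↔ ∃ y, s(x, y) ∈ M := by
  constructor
  · rintro ⟨e, he, hxe⟩
    obtain ⟨y, rfl⟩ := Sym2.mem_iff_exists.mp hxe
    exact ⟨y, he⟩
  · rintro ⟨y, hy⟩
    exact ⟨_, hy, Sym2.mem_mk_left x y⟩

lemma coveredVerts_insert_mk : coveredVerts (insert s(a, b) M) = {a, b} ∪ coveredVerts M := by
  ext x
  simp [coveredVerts, or_and_right, exists_or]

lemma IsMatchingSet.coveredVerts_sdiff_mk (hM : IsMatchingSet G M) (hab : s(a, b) ∈ M) :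
    coveredVerts (M \ {s(a, b)}) = coveredVerts M \ {a, b} := by
  ext x
  simp only [coveredVerts, Set.mem_sdiff, Set.mem_ofPred_eq, Set.mem_singleton_iff,
    Set.mem_insert_iff]
  constructor
  · rintro ⟨e, ⟨he, hne⟩, hxe⟩
    refine ⟨⟨e, he, hxe⟩, ?_⟩
    rintro (rfl | rfl)
    · exact hne (hM.eq_of_mem_of_mem he hab hxe (Sym2.mem_mk_left x b))
    · exact hne (hM.eq_of_mem_of_mem he hab hxe (Sym2.mem_mk_right a x))
  · rintro ⟨⟨e, he, hxe⟩, hx⟩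
    refine ⟨e, ⟨he, ?_⟩, hxe⟩
    rintro rfl
    exact hx (Sym2.mem_iff.mp hxe)

lemma IsMatchingSet.insert_mk (hM : IsMatchingSet G M) (hab : G.Adj a b)
    (ha : a ∉ coveredVerts M) (hb : b ∉ coveredVerts M) : IsMatchingSet G (insert s(a, b) M) := by
  refine ⟨Set.insert_subset hab hM.1, ?_⟩
  refine hM.2.insert fun f hf _ => ⟨?_, ?_⟩
  · intro x hx hxf
    rcases Sym2.mem_iff.mp hx with rfl | rfl
    exacts [ha ⟨f, hf, hxf⟩, hb ⟨f, hf, hxf⟩]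
  · intro x hxf hx
    rcases Sym2.mem_iff.mp hx with rfl | rfl
    exacts [ha ⟨f, hf, hxf⟩, hb ⟨f, hf, hxf⟩]

end CoveredVerts

section Bridge

variable {V : Type*} {G : SimpleGraph V} {N P : Set (Sym2 V)}

lemma neighborSet_fromEdgeSet_symmDiff (hN : IsMatchingSet G N) (hP : IsMatchingSet G P)
    (hcov : coveredVerts N = coveredVerts P) {x y : V} (hyN : s(x, y) ∈ N) (hyP : s(x, y) ∉ P) :
    ∃ p, p ≠ y ∧ (fromEdgeSet (symmDiff N P)).neighborSet x = {y, p} := by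
  obtain ⟨p, hp⟩ : ∃ p, s(x, p) ∈ P :=
    mem_coveredVerts_iff.mp (hcov ▸ mem_coveredVerts_iff.mpr ⟨y, hyN⟩)
  have hpy : p ≠ y := by
    rintro rfl
    exact hyP hp
  refine ⟨p, hpy, Set.ext fun z => ?_⟩
  simp only [mem_neighborSet, fromEdgeSet_adj, Set.mem_symmDiff, Set.mem_insert_iff,
    Set.mem_singleton_iff]
  constructor
  · rintro ⟨⟨hzN, -⟩ | ⟨hzP, -⟩, -⟩
    · exact Or.inl (hN.eq_of_mk_mem_of_mk_mem hzN hyN)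
    · exact Or.inr (hP.eq_of_mk_mem_of_mk_mem hzP hp)
  · rintro (rfl | rfl)
    · exact ⟨Or.inl ⟨hyN, hyP⟩, G.ne_of_adj (hN.1 hyN)⟩
    · exact ⟨Or.inr ⟨hp, fun hpN => hpy (hN.eq_of_mk_mem_of_mk_mem hpN hyN)⟩,
        G.ne_of_adj (hP.1 hp)⟩

lemma isCycles_fromEdgeSet_symmDiff (hN : IsMatchingSet G N) (hP : IsMatchingSet G P)
    (hcov : coveredVerts N = coveredVerts P) : (fromEdgeSet (symmDiff N P)).IsCycles := by
  rintro x ⟨y, hxy⟩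
  obtain ⟨⟨hyN, hyP⟩ | ⟨hyP, hyN⟩, -⟩ := (fromEdgeSet_adj _).mp hxy
  · obtain ⟨p, hpy, hnbr⟩ := neighborSet_fromEdgeSet_symmDiff hN hP hcov hyN hyP
    rw [hnbr, Set.ncard_pair hpy.symm]
  · obtain ⟨p, hpy, hnbr⟩ := neighborSet_fromEdgeSet_symmDiff hP hN hcov.symm hyP hyN
    rw [symmDiff_comm, hnbr, Set.ncard_pair hpy.symm]

lemma IsMatchingSet.mem_of_mem_of_isBridge [Finite V] (hN : IsMatchingSet G N)
    (hP : IsMatchingSet G P) (hcov : coveredVerts N = coveredVerts P) {e : Sym2 V}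
    (he : G.IsBridge e) (heN : e ∈ N) : e ∈ P := by
  induction e using Sym2.ind with
  | _ a b =>
    by_contra heP
    have hab : (fromEdgeSet (symmDiff N P)).Adj a b :=
      (fromEdgeSet_adj _).mpr ⟨Or.inl ⟨heN, heP⟩, G.ne_of_adj (hN.1 heN)⟩
    have hle : fromEdgeSet (symmDiff N P) ≤ G := (fromEdgeSet_le G).mpr fun f hf =>
      hf.1.elim (fun h => hN.1 h.1) (fun h => hP.1 h.1)
    exact isBridge_iff.mp he <|
      ((isCycles_fromEdgeSet_symmDiff hN hP hcov).reachable_deleteEdges hab).mono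
        (deleteEdges_mono hle)

end Bridge

section DelVerts

variable {V : Type*} {G H : SimpleGraph V} {S : Set V} {M : Set (Sym2 V)}

lemma delVerts_le : delVerts G S ≤ G := fun _ _ h => h.1

lemma isMatchingSet_delVerts (hM : IsMatchingSet G M) (hS : Disjoint (coveredVerts M) S) :
    IsMatchingSet (delVerts G S) M := by
  refine ⟨fun e he => ?_, hM.2⟩
  induction e using Sym2.ind with
  | _ x y =>
    exact ⟨hM.1 he, hS.notMem_of_mem_left ⟨_, he, Sym2.mem_mk_left x y⟩,
      hS.notMem_of_mem_left ⟨_, he, Sym2.mem_mk_right x y⟩⟩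

lemma IsMatchingSet.sdiff_of_sup_fromEdgeSet {s : Set (Sym2 V)}
    (hM : IsMatchingSet (H ⊔ fromEdgeSet s) M) : IsMatchingSet H (M \ s) := by
  refine ⟨fun e he => ?_, hM.2.mono Set.sdiff_subset⟩
  have := hM.1 he.1
  rw [edgeSet_sup, edgeSet_fromEdgeSet] at this
  exact this.resolve_right fun h => he.2 h.1

lemma disjoint_coveredVerts_of_isMatchingSet_delVerts_sup {a b : V}
    (hM : IsMatchingSet (delVerts G S ⊔ fromEdgeSet {s(a, b)}) M) (ha : a ∉ S) (hb : b ∉ S) :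
    Disjoint (coveredVerts M) S := by
  refine Set.disjoint_left.mpr fun x hx hxS => ?_
  obtain ⟨y, hy⟩ := mem_coveredVerts_iff.mp hx
  rcases hM.1 hy with ⟨-, hx, -⟩ | ⟨hxy, -⟩
  · exact hx hxS
  · rcases Sym2.eq_iff.mp hxy with ⟨rfl, -⟩ | ⟨rfl, -⟩
    exacts [ha hxS, hb hxS]

end DelVerts

lemma eq_or_eq_of_adj_of_degree_eq_two {V : Type*} [Fintype V] {G : SimpleGraph V}
    [DecidableRel G.Adj] {u v v' x : V} (hdeg : G.degree u = 2) (hv : G.Adj u v)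
    (hv' : G.Adj u v') (hne : v ≠ v') (hx : G.Adj u x) : x = v ∨ x = v' := by
  classical
  have hnbr : G.neighborFinset u = {v, v'} :=
    (Finset.eq_of_subset_of_card_le (by simp [Finset.insert_subset_iff, hv, hv'])
      (by rw [card_neighborFinset_eq_degree, hdeg, Finset.card_pair hne])).symm
  simpa [hnbr] using (G.mem_neighborFinset u x).mpr hx

section Reduction

variable {V : Type*} {G : SimpleGraph V} {u v u' w : V} {M : Set (Sym2 V)}

lemma isURMatching_insert_of_notMem [Fintype V] [DecidableRel G.Adj] (huv : G.Adj u v)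
    (huu' : G.Adj u u') (hdegu : G.degree u = 2) (hbr : G.IsBridge s(u, u')) (hu'v : u' ≠ v)
    (hM : IsURMatching (delVerts G {u, v} ⊔ fromEdgeSet {s(u', w)}) M)
    (hdisj : Disjoint (coveredVerts M) {u, v}) (hnot : s(u', w) ∉ M) :
    IsURMatching G (insert s(u, v) M) := by
  have huM : u ∉ coveredVerts M := hdisj.notMem_of_mem_right (by simp)
  have hvM : v ∉ coveredVerts M := hdisj.notMem_of_mem_right (by simp)
  have hM' : IsMatchingSet G (insert s(u, v) M) := by
    have hMG := hM.1.sdiff_of_sup_fromEdgeSet.mono delVerts_le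
    rw [Set.sdiff_singleton_eq_self hnot] at hMG
    exact hMG.insert_mk huv huM hvM
  refine ⟨hM', fun N hN hcov => ?_⟩
  have huvN : s(u, v) ∈ N := by
    obtain ⟨x, hx⟩ : ∃ x, s(u, x) ∈ N :=
      mem_coveredVerts_iff.mp (by simp [hcov, coveredVerts_insert_mk])
    rcases eq_or_eq_of_adj_of_degree_eq_two hdegu huv huu' hu'v.symm (hN.1 hx) with rfl | rfl
    · exact hx
    · rcases hN.mem_of_mem_of_isBridge hM' hcov hbr hx with h | h
      · exact absurd (Sym2.congr_right.mp h) hu'v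
      · exact absurd ⟨_, h, Sym2.mem_mk_left u x⟩ huM
  have hcovN : coveredVerts (N \ {s(u, v)}) = coveredVerts M := by
    rw [hN.coveredVerts_sdiff_mk huvN, hcov, coveredVerts_insert_mk, Set.union_sdiff_left,
      hdisj.sdiff_eq_left]
  have hNM := hM.2 _ ((isMatchingSet_delVerts (hN.subset Set.sdiff_subset)
    (hcovN ▸ hdisj)).mono le_sup_left) hcovN
  rw [← hNM, Set.insert_sdiff_singleton, Set.insert_eq_of_mem huvN]

lemma isMatchingSet_exchange_of_mem (huu' : G.Adj u u') (hvw : G.Adj v w) (huv : u ≠ v)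
    (hu'v : u' ≠ v) (hwu : w ≠ u)
    (hM : IsMatchingSet (delVerts G {u, v} ⊔ fromEdgeSet {s(u', w)}) M)
    (hdisj : Disjoint (coveredVerts M) {u, v}) (hmem : s(u', w) ∈ M) :
    IsMatchingSet G (insert s(u, u') (insert s(v, w) (M \ {s(u', w)}))) ∧
      coveredVerts (insert s(u, u') (insert s(v, w) (M \ {s(u', w)}))) =
        coveredVerts M ∪ {u, v} := by
  have huM : u ∉ coveredVerts M := hdisj.notMem_of_mem_right (by simp)
  have hvM : v ∉ coveredVerts M := hdisj.notMem_of_mem_right (by simp)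
  have hu'M : u' ∈ coveredVerts M := ⟨_, hmem, Sym2.mem_mk_left u' w⟩
  have hwM : w ∈ coveredVerts M := ⟨_, hmem, Sym2.mem_mk_right u' w⟩
  have hu'w : u' ≠ w := Adj.ne (G := delVerts G {u, v} ⊔ fromEdgeSet {s(u', w)}) (hM.1 hmem)
  have hcov := hM.coveredVerts_sdiff_mk hmem
  have hMG := hM.sdiff_of_sup_fromEdgeSet.mono delVerts_le
  refine ⟨(hMG.insert_mk hvw ?_ ?_).insert_mk huu' ?_ ?_, ?_⟩
  · simp [hcov, hvM]
  · simp [hcov]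
  · simp [coveredVerts_insert_mk, hcov, huM, huv, hwu.symm]
  · simp [coveredVerts_insert_mk, hcov, hu'v, hu'w]
  · ext x
    simp only [coveredVerts_insert_mk, hcov, Set.mem_union, Set.mem_insert_iff,
      Set.mem_singleton_iff, Set.mem_sdiff]
    constructor
    · rintro ((rfl | rfl) | (rfl | rfl) | ⟨hx, -⟩) <;> tauto
    · tauto

lemma isURMatching_exchange_of_mem [Finite V] (huu' : G.Adj u u') (hvw : G.Adj v w)
    (huv : u ≠ v) (hu'v : u' ≠ v) (hwu : w ≠ u) (hbr1 : G.IsBridge s(u, u'))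
    (hbr2 : G.IsBridge s(v, w)) (hM : IsURMatching (delVerts G {u, v} ⊔ fromEdgeSet {s(u', w)}) M)
    (hdisj : Disjoint (coveredVerts M) {u, v}) (hmem : s(u', w) ∈ M) :
    IsURMatching G (insert s(u, u') (insert s(v, w) (M \ {s(u', w)}))) := by
  obtain ⟨hM', hcovM'⟩ := isMatchingSet_exchange_of_mem huu' hvw huv hu'v hwu hM.1 hdisj hmem
  have huM : u ∉ coveredVerts M := hdisj.notMem_of_mem_right (by simp)
  have hvM : v ∉ coveredVerts M := hdisj.notMem_of_mem_right (by simp)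
  have hu'M : u' ∈ coveredVerts M := ⟨_, hmem, Sym2.mem_mk_left u' w⟩
  have hwM : w ∈ coveredVerts M := ⟨_, hmem, Sym2.mem_mk_right u' w⟩
  have hu'w : u' ≠ w := Adj.ne (G := delVerts G {u, v} ⊔ fromEdgeSet {s(u', w)}) (hM.1.1 hmem)
  refine ⟨hM', fun N hN hcov => ?_⟩
  have huu'N : s(u, u') ∈ N := hM'.mem_of_mem_of_isBridge hN hcov.symm hbr1 (by simp)
  have hvwN : s(v, w) ∈ N \ {s(u, u')} :=
    ⟨hM'.mem_of_mem_of_isBridge hN hcov.symm hbr2 (by simp), by simp [huv.symm, hu'v.symm]⟩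
  set N₁ := (N \ {s(u, u')}) \ {s(v, w)}
  have hcovN₁ : coveredVerts N₁ = coveredVerts M \ {u', w} := by
    rw [(hN.subset Set.sdiff_subset).coveredVerts_sdiff_mk hvwN, hN.coveredVerts_sdiff_mk huu'N,
      hcov, hcovM']
    ext x
    simp only [Set.mem_sdiff, Set.mem_union, Set.mem_insert_iff, Set.mem_singleton_iff]
    constructor
    · rintro ⟨⟨hx | rfl | rfl, hu⟩, hv⟩ <;> tauto
    · rintro ⟨hx, hx'⟩
      refine ⟨⟨Or.inl hx, ?_⟩, ?_⟩ <;> rintro (rfl | rfl) <;> tauto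
  have hN₁ : IsMatchingSet G N₁ := hN.subset (Set.sdiff_subset.trans Set.sdiff_subset)
  have hN₀ : IsMatchingSet (delVerts G {u, v} ⊔ fromEdgeSet {s(u', w)}) (insert s(u', w) N₁) :=
    ((isMatchingSet_delVerts hN₁ (hcovN₁ ▸ hdisj.mono_left Set.sdiff_subset)).mono
      le_sup_left).insert_mk (Or.inr ⟨rfl, hu'w⟩) (by simp [hcovN₁]) (by simp [hcovN₁])
  have hcovN₀ : coveredVerts (insert s(u', w) N₁) = coveredVerts M := by
    rw [coveredVerts_insert_mk, hcovN₁, Set.union_sdiff_self,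
      Set.union_eq_right.mpr (Set.pair_subset hu'M hwM)]
  have hu'wN₁ : s(u', w) ∉ N₁ := fun h =>
    (by simp [hcovN₁] : u' ∉ coveredVerts N₁) ⟨_, h, Sym2.mem_mk_left u' w⟩
  rw [← hM.2 _ hN₀ hcovN₀, Set.insert_sdiff_self_of_notMem hu'wN₁, Set.insert_sdiff_singleton,
    Set.insert_eq_of_mem hvwN, Set.insert_sdiff_singleton, Set.insert_eq_of_mem huu'N]

end Reduction

/-- Let `uv, uu', vw ∈ E(G)` with `u` of degree `2` with neighbors `v, u'`, and let
`uu'` and `vw` be bridges of `G`. If `M` is a uniquely restricted matching in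
`G' = (G - {u,v}) + u'w`, then `M ∪ {uv}` (if `u'w ∉ M`), respectively
`(M \ {u'w}) ∪ {uu', vw}` (if `u'w ∈ M`), is a uniquely restricted matching in `G`
covering exactly the vertices covered by `M` together with `u` and `v`. -/
theorem stmt17 {V : Type*} [Fintype V] (G : SimpleGraph V) [DecidableRel G.Adj]
    (u v u' w : V) (huv : G.Adj u v) (huu' : G.Adj u u') (hvw : G.Adj v w)
    (hdegu : G.degree u = 2)
    (hbr1 : G.IsBridge s(u, u')) (hbr2 : G.IsBridge s(v, w))
    (hu' : u' ≠ u ∧ u' ≠ v) (hw : w ≠ u ∧ w ≠ v)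
    (M : Set (Sym2 V))
    (hM : IsURMatching (delVerts G {u, v} ⊔ fromEdgeSet {s(u', w)}) M) :
    (s(u', w) ∉ M →
      IsURMatching G (insert s(u, v) M) ∧
        coveredVerts (insert s(u, v) M) = coveredVerts M ∪ {u, v}) ∧
    (s(u', w) ∈ M →
      IsURMatching G (insert s(u, u') (insert s(v, w) (M \ {s(u', w)}))) ∧
        coveredVerts (insert s(u, u') (insert s(v, w) (M \ {s(u', w)}))) =
          coveredVerts M ∪ {u, v}) := by
  have hdisj : Disjoint (coveredVerts M) {u, v} :=
    disjoint_coveredVerts_of_isMatchingSet_delVerts_sup hM.1 (by simp [hu'.1, hu'.2])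
      (by simp [hw.1, hw.2])
  refine ⟨fun hnot => ⟨?_, ?_⟩, fun hmem => ⟨?_, ?_⟩⟩
  · exact isURMatching_insert_of_notMem huv huu' hdegu hbr1 hu'.2 hM hdisj hnot
  · rw [coveredVerts_insert_mk, Set.union_comm]
  · exact isURMatching_exchange_of_mem huu' hvw huv.ne hu'.2 hw.1 hbr1 hbr2 hM hdisj hmem
  · exact (isMatchingSet_exchange_of_mem huu' hvw huv.ne hu'.2 hw.1 hM.1 hdisj hmem).2
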